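/- (Corollary 1) Let M be a labeled MDP, M' its augmented MDP, and φ an LTLf formula. If π'* is a policy of M' maximizing Pr(M'^{π'} ⊨ g(φ)) over all policies of M', then the policy π of M obtained from π'* by replacing every choice of action a_term with an arbitrary enabled action of M satisfies Pr(M^π ⊨ φ) = max_{π ∈ Π} Pr(M^π ⊨ φ). Hence policy synthesis maximizing the probability of satisfying the LTLf formula φ on M reduces to LTL maximal policy synthesis for g(φ) on M'. -/

import Mathlib

open scoped ENNReal

namespace LTLfMDP

/-- A labeled Markov decision process (data part): transition probabilities,
enabled actions, initial state and labeling function. -/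
structure MDP (S A AP : Type) where
  P : S → A → S → ℝ≥0∞
  enabled : S → Set A
  init : S
  label : S → Set AP

/-- A finite path from the initial state: the list of action/successor-state
steps taken (the implicit first state is `init`). -/
abbrev FinPath (S A : Type) := List (A × S)

/-- An infinite path from the initial state: at time `i` the action taken and
the successor state reached (the implicit first state is `init`). -/
abbrev InfPath (S A : Type) := ℕ → A × S

/-- A policy maps every finite path to an action. -/
abbrev Policy (S A : Type) := FinPath S A → A

variable {S A AP : Type}

/-- Well-formedness of a labeled MDP: every state has an enabled action and
the transition probabilities of enabled actions sum to one. -/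
def MDP.IsWF [Fintype S] (M : MDP S A AP) : Prop :=
  (∀ s : S, (M.enabled s).Nonempty) ∧
    ∀ (s : S) (a : A), a ∈ M.enabled s → (∑ s' : S, M.P s a s') = 1

/-- The last state of a finite path (`init` for the empty path). -/
def MDP.lastState (M : MDP S A AP) (l : FinPath S A) : S :=
  (l.map Prod.snd).getLastD M.init

/-- The `i`-th state `s_i` along a finite path (`s_0 = init`). -/
def MDP.stateAtF (M : MDP S A AP) (l : FinPath S A) (i : ℕ) : S :=
  M.lastState (l.take i)

/-- A finite path of the MDP: every action is enabled and every transition has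
positive probability. -/
def MDP.ValidFin (M : MDP S A AP) (l : FinPath S A) : Prop :=
  ∀ i (h : i < l.length),
    (l.get ⟨i, h⟩).1 ∈ M.enabled (M.stateAtF l i) ∧
      0 < M.P (M.stateAtF l i) (l.get ⟨i, h⟩).1 (l.get ⟨i, h⟩).2

/-- The `i`-th state `s_i` along an infinite path (`s_0 = init`). -/
def MDP.stateAtI (M : MDP S A AP) (w : InfPath S A) : ℕ → S
  | 0 => M.init
  | i + 1 => (w i).2

/-- An infinite path of the MDP: every action is enabled and every transition
has positive probability. -/
def MDP.ValidInf (M : MDP S A AP) (w : InfPath S A) : Prop :=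
  ∀ i : ℕ,
    (w i).1 ∈ M.enabled (M.stateAtI w i) ∧
      0 < M.P (M.stateAtI w i) (w i).1 (M.stateAtI w (i + 1))

/-- A policy of the MDP chooses an enabled action after every finite path. -/
def MDP.IsPolicy (M : MDP S A AP) (π : Policy S A) : Prop :=
  ∀ l : FinPath S A, π l ∈ M.enabled (M.lastState l)

/-- The finite prefix of length `n` of an infinite path. -/
def takeI (w : InfPath S A) (n : ℕ) : FinPath S A :=
  (List.range n).map w

/-- A finite path is `π`-consistent if each of its actions is the one `π`
assigns to the corresponding proper prefix. -/
def ConsistentFin (π : Policy S A) (l : FinPath S A) : Prop :=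
  ∀ i (h : i < l.length), (l.get ⟨i, h⟩).1 = π (l.take i)

/-- `Paths^π(s_init)`: the set of `π`-consistent infinite paths of the MDP. -/
def MDP.PathsSet (M : MDP S A AP) (π : Policy S A) : Set (InfPath S A) :=
  { w | M.ValidInf w ∧ ∀ i : ℕ, (w i).1 = π (takeI w i) }

/-- The cylinder set of a finite path: all `π`-consistent infinite paths of the
MDP extending it. -/
def MDP.Cyl (M : MDP S A AP) (π : Policy S A) (l : FinPath S A) :
    Set (InfPath S A) :=
  { w | w ∈ M.PathsSet π ∧ takeI w l.length = l }

/-- The σ-algebra generated by the cylinder sets of (valid, `π`-consistent)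
finite paths. -/
def MDP.cylSigma (M : MDP S A AP) (π : Policy S A) :
    MeasurableSpace (InfPath S A) :=
  MeasurableSpace.generateFrom
    { C | ∃ l : FinPath S A, M.ValidFin l ∧ ConsistentFin π l ∧ C = M.Cyl π l }

/-- The product of the transition probabilities along a finite path starting
in a given state. -/
noncomputable def MDP.weightFrom (M : MDP S A AP) : S → List (A × S) → ℝ≥0∞
  | _, [] => 1
  | s, (a, s') :: rest => M.P s a s' * M.weightFrom s' rest

/-- `∏_{0 ≤ i < n} P(s_i, a_i, s_{i+1})` for a finite path from `init`. -/
noncomputable def MDP.pathWeight (M : MDP S A AP) (l : FinPath S A) : ℝ≥0∞ :=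
  M.weightFrom M.init l

/-- `μ` is the probability measure `Pr^π` induced by the policy `π`: it assigns
to the cylinder set of every valid `π`-consistent finite path the product of
the transition probabilities along that path. -/
def IsCylMeasure (M : MDP S A AP) (π : Policy S A)
    (μ : @MeasureTheory.Measure (InfPath S A) (M.cylSigma π)) : Prop :=
  ∀ l : FinPath S A, M.ValidFin l → ConsistentFin π l →
    μ (M.Cyl π l) = M.pathWeight l

/-- `{w ∈ Paths^π(s_init) : pre(w) ∩ Paths_fin,φ ≠ ∅}`: the `π`-consistent
infinite paths having some finite prefix in the given set of finite paths. -/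
def MDP.SatFinSet (M : MDP S A AP) (π : Policy S A)
    (Pfin : Set (FinPath S A)) : Set (InfPath S A) :=
  { w | w ∈ M.PathsSet π ∧ ∃ l ∈ Pfin, takeI w l.length = l }

/-- The augmented MDP `M'`: state `none` is `s_term`, action `none` is
`a_term`, and atomic proposition `none` is `alive`. -/
noncomputable def MDP.augment (M : MDP S A AP) : MDP (Option S) (Option A) (Option AP) where
  P s a s' :=
    match s, a, s' with
    | some s0, some a0, some s1 => M.P s0 a0 s1
    | _, none, none => 1
    | _, _, _ => 0
  enabled s :=
    match s with
    | some s0 => insert none (Option.some '' M.enabled s0)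
    | none => {none}
  init := some M.init
  label s :=
    match s with
    | some s0 => insert none (Option.some '' M.label s0)
    | none => ∅

/-- A finite path of `M` viewed as a finite path of the augmented MDP `M'`. -/
def liftFin (l : FinPath S A) : FinPath (Option S) (Option A) :=
  l.map fun p => (some p.1, some p.2)

/-- Membership in `Π'`: under `π'` every `π'`-consistent path of the augmented
MDP eventually takes the action `a_term` (= `none`). -/
def MDP.Terminating (M' : MDP (Option S) (Option A) (Option AP))
    (π' : Policy (Option S) (Option A)) : Prop :=
  ∀ w ∈ M'.PathsSet π', ∃ i : ℕ, (w i).1 = (none : Option A)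

/-- Syntax of LTL / LTLf formulas over atomic propositions `α`. -/
inductive LTL (α : Type) : Type
  | tru : LTL α
  | atom : α → LTL α
  | neg : LTL α → LTL α
  | conj : LTL α → LTL α → LTL α
  | next : LTL α → LTL α
  | untl : LTL α → LTL α → LTL α

variable {α : Type}

/-- Infinite-trace (LTL) satisfaction `σ, i ⊨ φ`. -/
def LTL.SatI (σ : ℕ → Set α) : ℕ → LTL α → Prop
  | _, .tru => True
  | i, .atom p => p ∈ σ i
  | i, .neg φ => ¬ LTL.SatI σ i φ
  | i, .conj φ ψ => LTL.SatI σ i φ ∧ LTL.SatI σ i ψ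
  | i, .next φ => LTL.SatI σ (i + 1) φ
  | i, .untl φ ψ =>
      ∃ j : ℕ, i ≤ j ∧ LTL.SatI σ j ψ ∧ ∀ k : ℕ, i ≤ k → k < j → LTL.SatI σ k φ

/-- Infinite-trace (LTL) satisfaction `σ ⊨ φ`. -/
def LTL.Sat (σ : ℕ → Set α) (φ : LTL α) : Prop := LTL.SatI σ 0 φ

/-- `G φ` abbreviates `¬(⊤ U ¬φ)`. -/
def LTL.G (φ : LTL α) : LTL α := .neg (.untl .tru (.neg φ))

/-- Finite-trace (LTLf) satisfaction `ρ, i ⊨ φ` (positions outside the trace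
carry the empty letter, which is never consulted from a position inside a
nonempty trace). -/
def LTL.SatFI (ρ : List (Set α)) : ℕ → LTL α → Prop
  | _, .tru => True
  | i, .atom p => p ∈ ρ.getD i ∅
  | i, .neg φ => ¬ LTL.SatFI ρ i φ
  | i, .conj φ ψ => LTL.SatFI ρ i φ ∧ LTL.SatFI ρ i ψ
  | i, .next φ => i + 1 < ρ.length ∧ LTL.SatFI ρ (i + 1) φ
  | i, .untl φ ψ =>
      ∃ j : ℕ, i ≤ j ∧ j < ρ.length ∧ LTL.SatFI ρ j ψ ∧
        ∀ k : ℕ, i ≤ k → k < j → LTL.SatFI ρ k φ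

/-- Finite-trace (LTLf) satisfaction `ρ ⊨ φ`. -/
def LTL.SatF (ρ : List (Set α)) (φ : LTL α) : Prop := LTL.SatFI ρ 0 φ

/-- The translation `t` from LTLf formulas over `α` to LTL formulas over
`Option α`, where the fresh proposition `alive` is `none`. -/
def LTL.trans : LTL α → LTL (Option α)
  | .tru => .tru
  | .atom p => .conj (.atom (some p)) (.atom none)
  | .neg φ => .neg φ.trans
  | .conj φ ψ => .conj φ.trans ψ.trans
  | .next φ => .next (.conj (.atom none) φ.trans)
  | .untl φ ψ => .untl φ.trans (.conj (.atom none) ψ.trans)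

/-- `g(φ) = t(φ) ∧ (alive U (G ¬alive))`. -/
def LTL.gtrans (φ : LTL α) : LTL (Option α) :=
  .conj φ.trans (.untl (.atom none) (LTL.G (.neg (.atom none))))

/-- The lift of a finite trace over `2^AP` to an infinite trace over
`2^(AP ∪ {alive})`: the `i`-th letter is `ρ_i ∪ {alive}` for `i < |ρ|`
and `∅` afterwards. -/
def liftTrace (ρ : List (Set α)) : ℕ → Set (Option α) := fun i =>
  if i < ρ.length then insert none (Option.some '' ρ.getD i ∅) else ∅

/-- `{w ∈ Paths^π(s_init) : w ⊨ φ}` for an LTLf formula `φ`: some finite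
prefix of `w` has labeling `L(s_0)…L(s_k)` in `L(φ)`. -/
def MDP.SatPhiSet (M : MDP S A AP) (π : Policy S A) (φ : LTL AP) :
    Set (InfPath S A) :=
  { w | w ∈ M.PathsSet π ∧ ∃ k : ℕ,
      LTL.SatF ((List.range (k + 1)).map fun i => M.label (M.stateAtI w i)) φ }

/-- `{w ∈ Paths^π(s_init) : L(w) ⊨ ψ}` for an LTL formula `ψ`: the labeling of
the infinite path `w` satisfies `ψ` under infinite-trace semantics. -/
def MDP.SatLTLSet {S A AP' : Type} (M : MDP S A AP') (π : Policy S A)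
    (ψ : LTL AP') : Set (InfPath S A) :=
  { w | w ∈ M.PathsSet π ∧ LTL.Sat (fun i => M.label (M.stateAtI w i)) ψ }

/-!
Both satisfaction probabilities are total weights of prefix-free sets of finite paths
of `M`, because the cylinders of such a set are disjoint. A path of `M'` satisfies `g(φ)`
exactly when it is the lift of a finite path `l` of `M` whose trace satisfies `φ`,
followed by `a_term`; so `Pr(M'^{π'} ⊨ g(φ))` is the weight of the `φ`-paths after which
`π'` terminates. A policy `π₂` of `M` is matched by the policy of `M'` that follows `π₂`
and terminates at the first prefix satisfying `φ`: both have the weight of the minimal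
`φ`-prefixes as satisfaction probability, so `Pr(M^{π₂} ⊨ φ) ≤ Pr(M'^{π'*} ⊨ g(φ))`.
Conversely, the paths after which `π'*` terminates are consistent with `π`, and their
cylinders under `π` are disjoint and contained in `{w ⊨ φ}`, so
`Pr(M'^{π'*} ⊨ g(φ)) ≤ Pr(M^π ⊨ φ)`.
-/

theorem length_takeI (w : InfPath S A) (n : ℕ) : (takeI w n).length = n := by
  simp [takeI]

theorem takeI_succ (w : InfPath S A) (n : ℕ) : takeI w (n + 1) = takeI w n ++ [w n] := by
  simp [takeI, List.range_succ]

theorem take_takeI (w : InfPath S A) {m n : ℕ} (h : m ≤ n) :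
    (takeI w n).take m = takeI w m := by
  simp [takeI, ← List.map_take, List.take_range, Nat.min_eq_left h]

theorem forall_getElem_take_concat {β : Type} (Q : List β → β → Prop) (l : List β)
    (b : β) :
    (∀ i (h : i < (l ++ [b]).length), Q ((l ++ [b]).take i) (l ++ [b])[i]) ↔
      (∀ i (h : i < l.length), Q (l.take i) l[i]) ∧ Q l b := by
  constructor
  · intro H
    refine ⟨fun i h => ?_, ?_⟩
    · have := H i (by simp; omega)
      rwa [List.take_append_of_le_length h.le, List.getElem_append_left h] at this
    · simpa using H l.length (by simp)
  · rintro ⟨H, hb⟩ i h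
    rcases Nat.lt_or_ge i l.length with hi | hi
    · simpa [List.take_append_of_le_length hi.le, List.getElem_append_left hi] using H i hi
    · obtain rfl : i = l.length := by simp at h; omega
      simpa using hb

theorem forall_getElem_take_of_prefix {β : Type} (Q : List β → β → Prop)
    {l₁ l₂ : List β} (hp : l₁ <+: l₂)
    (H : ∀ i (h : i < l₂.length), Q (l₂.take i) l₂[i]) :
    ∀ i (h : i < l₁.length), Q (l₁.take i) l₁[i] := by
  obtain ⟨t, rfl⟩ := hp
  intro i h
  have := H i (by simp; omega)
  rwa [List.take_append_of_le_length h.le, List.getElem_append_left h] at this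

theorem MDP.lastState_concat (M : MDP S A AP) (l : FinPath S A) (p : A × S) :
    M.lastState (l ++ [p]) = p.2 := by
  simp [MDP.lastState]

theorem MDP.stateAtI_eq_lastState_takeI (M : MDP S A AP) (w : InfPath S A) (n : ℕ) :
    M.stateAtI w n = M.lastState (takeI w n) := by
  cases n with
  | zero => rfl
  | succ n => rw [takeI_succ, M.lastState_concat]; rfl

theorem MDP.stateAtF_takeI (M : MDP S A AP) (w : InfPath S A) {i n : ℕ} (h : i ≤ n) :
    M.stateAtF (takeI w n) i = M.stateAtI w i := by
  rw [MDP.stateAtF, take_takeI w h, M.stateAtI_eq_lastState_takeI]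

theorem MDP.validFin_concat (M : MDP S A AP) (l : FinPath S A) (p : A × S) :
    M.ValidFin (l ++ [p]) ↔ M.ValidFin l ∧
      p.1 ∈ M.enabled (M.lastState l) ∧ 0 < M.P (M.lastState l) p.1 p.2 :=
  forall_getElem_take_concat
    (fun l' q => q.1 ∈ M.enabled (M.lastState l') ∧ 0 < M.P (M.lastState l') q.1 q.2) l p

theorem consistentFin_concat (π : Policy S A) (l : FinPath S A) (p : A × S) :
    ConsistentFin π (l ++ [p]) ↔ ConsistentFin π l ∧ p.1 = π l :=
  forall_getElem_take_concat (fun l' q => q.1 = π l') l p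

theorem ConsistentFin.of_prefix {π : Policy S A} {l₁ l₂ : FinPath S A} (hp : l₁ <+: l₂)
    (h : ConsistentFin π l₂) : ConsistentFin π l₁ :=
  forall_getElem_take_of_prefix (fun l' q => q.1 = π l') hp h

theorem MDP.validFin_takeI (M : MDP S A AP) {w : InfPath S A} (hw : M.ValidInf w) (n : ℕ) :
    M.ValidFin (takeI w n) := by
  induction n with
  | zero => intro i h; simp [takeI] at h
  | succ n ih =>
    rw [takeI_succ, M.validFin_concat, ← M.stateAtI_eq_lastState_takeI]
    exact ⟨ih, hw n⟩

theorem MDP.consistentFin_takeI (M : MDP S A AP) {π : Policy S A} {w : InfPath S A}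
    (hw : w ∈ M.PathsSet π) (n : ℕ) : ConsistentFin π (takeI w n) := by
  induction n with
  | zero => intro i h; simp [takeI] at h
  | succ n ih =>
    rw [takeI_succ, consistentFin_concat]
    exact ⟨ih, hw.2 n⟩

theorem MDP.prefix_or_prefix_of_mem_cyl (M : MDP S A AP) {π : Policy S A} {w : InfPath S A}
    {l₁ l₂ : FinPath S A} (h₁ : w ∈ M.Cyl π l₁) (h₂ : w ∈ M.Cyl π l₂) :
    l₁ <+: l₂ ∨ l₂ <+: l₁ := by
  have hpre : ∀ {l : FinPath S A} {n : ℕ}, w ∈ M.Cyl π l → l.length ≤ n →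
      l <+: takeI w n := by
    intro l n hl hn
    rw [← hl.2, ← take_takeI w hn]
    exact List.take_prefix _ _
  exact List.prefix_or_prefix_of_prefix (hpre h₁ (Nat.le_add_right _ l₂.length))
    (hpre h₂ (Nat.le_add_left _ _))

theorem MDP.pairwiseDisjoint_cyl (M : MDP S A AP) (π : Policy S A) {γ : Type} {D : Set γ}
    {f : γ → FinPath S A} (hD : ∀ x ∈ D, ∀ y ∈ D, f x <+: f y → x = y) :
    D.PairwiseDisjoint fun x => M.Cyl π (f x) := by
  intro x hx y hy hne
  refine Set.disjoint_left.2 fun w hwx hwy => ?_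
  rcases M.prefix_or_prefix_of_mem_cyl hwx hwy with h | h
  · exact hne (hD x hx y hy h)
  · exact hne (hD y hy x hx h).symm

theorem IsCylMeasure.measure_biUnion_cyl {M : MDP S A AP} {π : Policy S A}
    {μ : @MeasureTheory.Measure (InfPath S A) (M.cylSigma π)} (hμ : IsCylMeasure M π μ)
    {γ : Type} [Countable γ] {D : Set γ} {f : γ → FinPath S A}
    (hv : ∀ x ∈ D, M.ValidFin (f x)) (hc : ∀ x ∈ D, ConsistentFin π (f x))
    (hD : ∀ x ∈ D, ∀ y ∈ D, f x <+: f y → x = y) :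
    μ (⋃ x ∈ D, M.Cyl π (f x)) = ∑' x : D, M.pathWeight (f x) := by
  let _ : MeasurableSpace (InfPath S A) := M.cylSigma π
  have hmeas : ∀ x ∈ D, MeasurableSet (M.Cyl π (f x)) := fun x hx =>
    MeasurableSpace.measurableSet_generateFrom ⟨f x, hv x hx, hc x hx, rfl⟩
  rw [MeasureTheory.measure_biUnion D.to_countable (M.pairwiseDisjoint_cyl π hD) hmeas]
  exact tsum_congr fun x => hμ (f x) (hv x x.2) (hc x x.2)

theorem none_mem_liftTrace (ρ : List (Set α)) (i : ℕ) :
    none ∈ liftTrace ρ i ↔ i < ρ.length := by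
  by_cases h : i < ρ.length <;> simp [liftTrace, h]

theorem some_mem_liftTrace (ρ : List (Set α)) (i : ℕ) (p : α) :
    some p ∈ liftTrace ρ i ↔ i < ρ.length ∧ p ∈ ρ.getD i ∅ := by
  by_cases h : i < ρ.length <;> simp [liftTrace, h]

theorem LTL.satI_trans_liftTrace_iff (φ : LTL α) (ρ : List (Set α)) {i : ℕ}
    (hi : i < ρ.length) : LTL.SatI (liftTrace ρ) i φ.trans ↔ LTL.SatFI ρ i φ := by
  induction φ generalizing i with
  | tru => simp [LTL.trans, LTL.SatI, LTL.SatFI]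
  | atom p => simp [LTL.trans, LTL.SatI, LTL.SatFI, some_mem_liftTrace, none_mem_liftTrace, hi]
  | neg φ ih => simp only [LTL.trans, LTL.SatI, LTL.SatFI, ih hi]
  | conj φ ψ ihφ ihψ => simp only [LTL.trans, LTL.SatI, LTL.SatFI, ihφ hi, ihψ hi]
  | next φ ih =>
    simp only [LTL.trans, LTL.SatI, LTL.SatFI, none_mem_liftTrace]
    exact and_congr_right ih
  | untl φ ψ ihφ ihψ =>
    simp only [LTL.trans, LTL.SatI, LTL.SatFI, none_mem_liftTrace]
    refine exists_congr fun j => ?_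
    constructor
    · rintro ⟨hij, ⟨hj, hψ⟩, hφ⟩
      exact ⟨hij, hj, (ihψ hj).1 hψ, fun k hik hkj => (ihφ (by omega)).1 (hφ k hik hkj)⟩
    · rintro ⟨hij, hj, hψ, hφ⟩
      exact ⟨hij, ⟨hj, (ihψ hj).2 hψ⟩,
        fun k hik hkj => (ihφ (by omega)).2 (hφ k hik hkj)⟩

theorem LTL.sat_gtrans_liftTrace_iff (φ : LTL α) {ρ : List (Set α)} (hρ : ρ ≠ []) :
    LTL.Sat (liftTrace ρ) φ.gtrans ↔ LTL.SatF ρ φ := by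
  have h0 : 0 < ρ.length := List.length_pos_iff.2 hρ
  refine (and_iff_left ⟨ρ.length, Nat.zero_le _, ?_, fun k _ hk => ?_⟩).trans
    (LTL.satI_trans_liftTrace_iff φ ρ h0)
  · simp only [LTL.G, LTL.SatI, none_mem_liftTrace]
    rintro ⟨j, hj, hmem, -⟩
    exact hmem (by omega)
  · exact (none_mem_liftTrace ρ k).2 hk

theorem LTL.SatI.exists_of_untl_G {σ : ℕ → Set α} {i : ℕ} {ψ χ : LTL α}
    (h : LTL.SatI σ i (.untl ψ (LTL.G χ))) : ∃ j, LTL.SatI σ j χ := by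
  obtain ⟨j, -, hG, -⟩ := h
  exact ⟨j, by_contra fun hχ => hG ⟨j, le_rfl, hχ, fun _ _ _ => trivial⟩⟩

def MDP.traceF (M : MDP S A AP) (l : FinPath S A) : List (Set AP) :=
  (List.range (l.length + 1)).map fun i => M.label (M.stateAtF l i)

theorem MDP.traceF_ne_nil (M : MDP S A AP) (l : FinPath S A) : M.traceF l ≠ [] := by
  simp [MDP.traceF]

theorem MDP.traceF_takeI (M : MDP S A AP) (w : InfPath S A) (k : ℕ) :
    M.traceF (takeI w k) = (List.range (k + 1)).map fun i => M.label (M.stateAtI w i) := by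
  rw [MDP.traceF, length_takeI]
  refine List.map_congr_left fun i hi => ?_
  rw [M.stateAtF_takeI w (by simp at hi; omega)]

def MDP.minSatPaths (M : MDP S A AP) (π : Policy S A) (φ : LTL AP) : Set (FinPath S A) :=
  {l | M.ValidFin l ∧ ConsistentFin π l ∧ LTL.SatF (M.traceF l) φ ∧
      ∀ m < l.length, ¬ LTL.SatF (M.traceF (l.take m)) φ}

theorem MDP.cyl_subset_satPhiSet (M : MDP S A AP) (π : Policy S A) {φ : LTL AP}
    {l : FinPath S A} (hl : LTL.SatF (M.traceF l) φ) : M.Cyl π l ⊆ M.SatPhiSet π φ := by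
  rintro w ⟨hw, htake⟩
  refine ⟨hw, l.length, ?_⟩
  rwa [← M.traceF_takeI, htake]

theorem MDP.satPhiSet_eq_biUnion (M : MDP S A AP) (π : Policy S A) (φ : LTL AP) :
    M.SatPhiSet π φ = ⋃ l ∈ M.minSatPaths π φ, M.Cyl π l := by
  classical
  refine subset_antisymm ?_ (Set.iUnion₂_subset fun l hl => M.cyl_subset_satPhiSet π hl.2.2.1)
  rintro w ⟨hw, k, hk⟩
  rw [← M.traceF_takeI] at hk
  have hex : ∃ n, LTL.SatF (M.traceF (takeI w n)) φ := ⟨k, hk⟩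
  refine Set.mem_biUnion (x := takeI w (Nat.find hex)) ⟨M.validFin_takeI hw.1 _,
    M.consistentFin_takeI hw _, Nat.find_spec hex, fun m hm => ?_⟩ ⟨hw, by rw [length_takeI]⟩
  rw [length_takeI] at hm
  rw [take_takeI w hm.le]
  exact Nat.find_min hex hm

theorem MDP.eq_of_prefix_of_mem_minSatPaths (M : MDP S A AP) {π : Policy S A}
    {φ : LTL AP} {l₁ l₂ : FinPath S A} (h₁ : l₁ ∈ M.minSatPaths π φ)
    (h₂ : l₂ ∈ M.minSatPaths π φ) (hp : l₁ <+: l₂) : l₁ = l₂ := by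
  by_contra hne
  have hlt : l₁.length < l₂.length :=
    lt_of_le_of_ne hp.length_le fun h => hne (hp.eq_of_length h)
  exact h₂.2.2.2 _ hlt (List.prefix_iff_eq_take.1 hp ▸ h₁.2.2.1)

theorem IsCylMeasure.measure_satPhiSet [Countable S] [Countable A] {M : MDP S A AP}
    {π : Policy S A} {μ : @MeasureTheory.Measure (InfPath S A) (M.cylSigma π)}
    (hμ : IsCylMeasure M π μ) (φ : LTL AP) :
    μ (M.SatPhiSet π φ) = ∑' l : M.minSatPaths π φ, M.pathWeight l := by
  rw [M.satPhiSet_eq_biUnion]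
  exact hμ.measure_biUnion_cyl (f := id) (fun l hl => hl.1) (fun l hl => hl.2.1)
    fun l₁ h₁ l₂ h₂ => M.eq_of_prefix_of_mem_minSatPaths h₁ h₂

section Augment

variable (M : MDP S A AP)

theorem MDP.augment_P_none_some (s : Option S) (s' : S) : M.augment.P s none (some s') = 0 := by
  cases s <;> rfl

theorem MDP.augment_P_some_none (s : Option S) (a : A) : M.augment.P s (some a) none = 0 := by
  cases s <;> rfl

theorem MDP.none_mem_augment_enabled (s : Option S) : none ∈ M.augment.enabled s := by
  cases s <;> simp [MDP.augment]

theorem MDP.some_mem_augment_enabled_iff (s : S) (a : A) :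
    some a ∈ M.augment.enabled (some s) ↔ a ∈ M.enabled s := by
  simp [MDP.augment]

theorem liftFin_concat (l : FinPath S A) (p : A × S) :
    liftFin (l ++ [p]) = liftFin l ++ [(some p.1, some p.2)] := by
  simp [liftFin]

theorem liftFin_injective : Function.Injective (liftFin (S := S) (A := A)) :=
  List.map_injective_iff.2 fun p q h => by simpa [Prod.ext_iff] using h

theorem MDP.lastState_liftFin (l : FinPath S A) :
    M.augment.lastState (liftFin l) = some (M.lastState l) := by
  induction l using List.reverseRecOn with
  | nil => rfl
  | append_singleton l p _ => rw [liftFin_concat, MDP.lastState_concat, MDP.lastState_concat]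

theorem MDP.validFin_liftFin_iff (l : FinPath S A) :
    M.augment.ValidFin (liftFin l) ↔ M.ValidFin l := by
  induction l using List.reverseRecOn with
  | nil => simp [liftFin, MDP.ValidFin]
  | append_singleton l p ih =>
    rw [liftFin_concat, MDP.validFin_concat, MDP.validFin_concat, ih, M.lastState_liftFin,
      M.some_mem_augment_enabled_iff]
    rfl

theorem consistentFin_liftFin_iff (π' : Policy (Option S) (Option A)) (l : FinPath S A) :
    ConsistentFin π' (liftFin l) ↔
      ∀ i (h : i < l.length), some l[i].1 = π' (liftFin (l.take i)) := by
  simp [ConsistentFin, liftFin, List.map_take]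

def termPath (l : FinPath S A) : FinPath (Option S) (Option A) :=
  liftFin l ++ [(none, none)]

theorem length_termPath (l : FinPath S A) : (termPath l).length = l.length + 1 := by
  simp [termPath, liftFin]

theorem MDP.validFin_termPath_iff (l : FinPath S A) :
    M.augment.ValidFin (termPath l) ↔ M.ValidFin l := by
  rw [termPath, MDP.validFin_concat, M.validFin_liftFin_iff, and_iff_left]
  exact ⟨M.none_mem_augment_enabled _, by simp [MDP.augment]⟩

theorem consistentFin_termPath_iff (π' : Policy (Option S) (Option A)) (l : FinPath S A) :
    ConsistentFin π' (termPath l) ↔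
      ConsistentFin π' (liftFin l) ∧ π' (liftFin l) = none := by
  rw [termPath, consistentFin_concat, eq_comm (a := none)]

theorem MDP.pathWeight_termPath (l : FinPath S A) :
    M.augment.pathWeight (termPath l) = M.pathWeight l := by
  suffices ∀ s, M.augment.weightFrom (some s) (termPath l) = M.weightFrom s l from this M.init
  induction l with
  | nil => intro s; simp [termPath, liftFin, MDP.weightFrom, MDP.augment]
  | cons p l ih =>
    intro s
    exact congrArg (M.P s p.1 p.2 * ·) (ih p.2)

theorem eq_of_termPath_prefix {l₁ l₂ : FinPath S A} (h : termPath l₁ <+: termPath l₂) :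
    l₁ = l₂ := by
  rcases List.prefix_concat_iff.1 h with h | h
  · exact liftFin_injective (List.append_cancel_right h)
  · have : ((none, none) : Option A × Option S) ∈ liftFin l₂ :=
      h.subset (List.mem_append_right _ (List.mem_singleton_self _))
    simp [liftFin] at this

theorem MDP.augment_stateAtF_termPath (l : FinPath S A) {i : ℕ} (hi : i ≤ l.length) :
    M.augment.stateAtF (termPath l) i = some (M.stateAtF l i) := by
  rw [MDP.stateAtF, termPath, List.take_append_of_le_length (by simpa [liftFin] using hi),
    liftFin, ← List.map_take, ← liftFin, M.lastState_liftFin]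
  rfl

end Augment

section AugmentPaths

variable {M : MDP S A AP} {w : InfPath (Option S) (Option A)}

theorem MDP.ValidInf.augment_stateAtI_succ_eq_none (hw : M.augment.ValidInf w) {n : ℕ}
    (hn : M.augment.stateAtI w n = none) : M.augment.stateAtI w (n + 1) = none := by
  obtain ⟨ha, hP⟩ := hw n
  rw [hn] at ha hP
  rw [show (w n).1 = none from ha] at hP
  cases h : M.augment.stateAtI w (n + 1) with
  | none => rfl
  | some s => rw [h, M.augment_P_none_some] at hP; exact absurd hP (lt_irrefl 0)

theorem MDP.ValidInf.augment_stateAtI_eq_none_of_le (hw : M.augment.ValidInf w) {n m : ℕ}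
    (hn : M.augment.stateAtI w n = none) (hnm : n ≤ m) : M.augment.stateAtI w m = none := by
  induction m, hnm using Nat.le_induction with
  | base => exact hn
  | succ m _ ih => exact hw.augment_stateAtI_succ_eq_none ih

theorem MDP.ValidInf.augment_step_eq_some (hw : M.augment.ValidInf w) {n : ℕ} {s : S}
    (hs : M.augment.stateAtI w (n + 1) = some s) : ∃ a, w n = (some a, some s) := by
  have hP := (hw n).2
  rw [hs] at hP
  cases ha : (w n).1 with
  | none => rw [ha, M.augment_P_none_some] at hP; exact absurd hP (lt_irrefl 0)
  | some a => exact ⟨a, Prod.ext ha hs⟩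

theorem MDP.ValidInf.augment_step_eq_none (hw : M.augment.ValidInf w) {n : ℕ}
    (hn : M.augment.stateAtI w (n + 1) = none) : w n = (none, none) := by
  have hP := (hw n).2
  rw [hn] at hP
  cases ha : (w n).1 with
  | none => exact Prod.ext ha hn
  | some a => rw [ha, M.augment_P_some_none] at hP; exact absurd hP (lt_irrefl 0)

theorem MDP.ValidInf.exists_liftFin_eq_takeI (hw : M.augment.ValidInf w) {n : ℕ}
    (hn : M.augment.stateAtI w n ≠ none) : ∃ l, liftFin l = takeI w n := by
  induction n with
  | zero => exact ⟨[], rfl⟩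
  | succ n ih =>
    obtain ⟨l, hl⟩ :=
      ih fun h => hn (hw.augment_stateAtI_eq_none_of_le h (Nat.le_succ n))
    obtain ⟨s, hs⟩ := Option.ne_none_iff_exists'.1 hn
    obtain ⟨a, ha⟩ := hw.augment_step_eq_some hs
    exact ⟨l ++ [(a, s)], by rw [liftFin_concat, hl, takeI_succ, ha]⟩

theorem MDP.ValidInf.exists_termPath_eq_takeI (hw : M.augment.ValidInf w) {j : ℕ}
    (hj : M.augment.stateAtI w j = none) : ∃ l, termPath l = takeI w (l.length + 1) := by
  classical
  have hex : ∃ j, M.augment.stateAtI w j = none := ⟨j, hj⟩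
  obtain ⟨n, hn⟩ : ∃ n, Nat.find hex = n + 1 :=
    Nat.exists_eq_add_one_of_ne_zero fun h => by
      have h0 := Nat.find_spec hex
      rw [h] at h0
      cases h0
  obtain ⟨l, hl⟩ := hw.exists_liftFin_eq_takeI (Nat.find_min hex (by omega : n < Nat.find hex))
  have hlen : l.length = n := by simpa [liftFin, length_takeI] using congrArg List.length hl
  refine ⟨l, ?_⟩
  rw [termPath, hl, hlen, takeI_succ, hw.augment_step_eq_none (hn ▸ Nat.find_spec hex)]

theorem MDP.ValidInf.augment_label_eq_liftTrace (hw : M.augment.ValidInf w) {l : FinPath S A}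
    (hl : termPath l = takeI w (l.length + 1)) :
    (fun i => M.augment.label (M.augment.stateAtI w i)) = liftTrace (M.traceF l) := by
  have hlen : (M.traceF l).length = l.length + 1 := by simp [MDP.traceF]
  funext i
  by_cases hi : i ≤ l.length
  · have hs : M.augment.stateAtI w i = some (M.stateAtF l i) := by
      rw [← M.augment.stateAtF_takeI w (by omega : i ≤ l.length + 1), ← hl,
        M.augment_stateAtF_termPath l hi]
    rw [hs, liftTrace, if_pos (by omega)]
    simp [MDP.augment, MDP.traceF, List.getD_eq_getElem?_getD, Nat.lt_succ_of_le hi]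
  · have hs : M.augment.stateAtI w (l.length + 1) = none := by
      rw [M.augment.stateAtI_eq_lastState_takeI, ← hl, termPath, MDP.lastState_concat]
    rw [hw.augment_stateAtI_eq_none_of_le hs (by omega), liftTrace, if_neg (by omega)]
    rfl

end AugmentPaths

/-- A path of `M'` satisfies `g(φ)` exactly when it starts with `termPath l` for some
`l` in this set. -/
def MDP.termSatPaths (M : MDP S A AP) (π' : Policy (Option S) (Option A)) (φ : LTL AP) :
    Set (FinPath S A) :=
  {l | M.ValidFin l ∧ ConsistentFin π' (termPath l) ∧ LTL.SatF (M.traceF l) φ}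

theorem MDP.augment_satLTLSet_gtrans_eq_biUnion (M : MDP S A AP)
    (π' : Policy (Option S) (Option A)) (φ : LTL AP) :
    M.augment.SatLTLSet π' φ.gtrans =
      ⋃ l ∈ M.termSatPaths π' φ, M.augment.Cyl π' (termPath l) := by
  ext w
  simp only [Set.mem_iUnion, exists_prop]
  constructor
  · rintro ⟨hw, hsat⟩
    obtain ⟨j, hj⟩ := LTL.SatI.exists_of_untl_G hsat.2
    have hdead : M.augment.stateAtI w j = none := by
      cases h : M.augment.stateAtI w j with
      | none => rfl
      | some s =>
        refine (hj ?_).elim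
        show none ∈ M.augment.label (M.augment.stateAtI w j)
        rw [h]
        exact Set.mem_insert _ _
    obtain ⟨l, hl⟩ := hw.1.exists_termPath_eq_takeI hdead
    rw [LTL.Sat, hw.1.augment_label_eq_liftTrace hl] at hsat
    refine ⟨l, ⟨(M.validFin_termPath_iff l).1 (hl ▸ M.augment.validFin_takeI hw.1 _),
      hl ▸ M.augment.consistentFin_takeI hw _,
      (LTL.sat_gtrans_liftTrace_iff φ (M.traceF_ne_nil l)).1 hsat⟩, hw, ?_⟩
    rw [length_termPath, hl]
  · rintro ⟨l, hl, hw, htake⟩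
    rw [length_termPath] at htake
    refine ⟨hw, ?_⟩
    rw [LTL.Sat, hw.1.augment_label_eq_liftTrace htake.symm]
    exact (LTL.sat_gtrans_liftTrace_iff φ (M.traceF_ne_nil l)).2 hl.2.2

theorem IsCylMeasure.measure_augment_satLTLSet_gtrans [Countable S] [Countable A]
    {M : MDP S A AP} {π' : Policy (Option S) (Option A)}
    {μ : @MeasureTheory.Measure (InfPath (Option S) (Option A)) (M.augment.cylSigma π')}
    (hμ : IsCylMeasure M.augment π' μ) (φ : LTL AP) :
    μ (M.augment.SatLTLSet π' φ.gtrans) = ∑' l : M.termSatPaths π' φ, M.pathWeight l := by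
  rw [M.augment_satLTLSet_gtrans_eq_biUnion, hμ.measure_biUnion_cyl
    (fun l hl => (M.validFin_termPath_iff l).2 hl.1) (fun l hl => hl.2.1)
    fun _ _ _ _ => eq_of_termPath_prefix]
  exact tsum_congr fun l => M.pathWeight_termPath l

theorem MDP.eq_of_prefix_of_mem_termSatPaths (M : MDP S A AP) {π' : Policy (Option S) (Option A)}
    {φ : LTL AP} {l₁ l₂ : FinPath S A} (h₁ : l₁ ∈ M.termSatPaths π' φ)
    (h₂ : l₂ ∈ M.termSatPaths π' φ) (hp : l₁ <+: l₂) : l₁ = l₂ := by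
  obtain ⟨_ | ⟨p, t⟩, rfl⟩ := hp
  · exact (List.append_nil l₁).symm
  · have hstep : liftFin (l₁ ++ [p]) <+: termPath (l₁ ++ p :: t) :=
      (List.IsPrefix.map _ ⟨t, by simp⟩).trans (List.prefix_append _ _)
    have hsome := ((consistentFin_concat π' _ _).1
      (liftFin_concat l₁ p ▸ h₂.2.1.of_prefix hstep)).2
    have hnone := ((consistentFin_termPath_iff π' l₁).1 h₁.2.1).2
    exact absurd (hsome.trans hnone) (Option.some_ne_none _)

theorem MDP.consistentFin_of_mem_termSatPaths (M : MDP S A AP) {π' : Policy (Option S) (Option A)}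
    {π : Policy S A} {φ : LTL AP}
    (hπ : ∀ (l : FinPath S A) (a : A), π' (liftFin l) = some a → π l = a)
    {l : FinPath S A} (hl : l ∈ M.termSatPaths π' φ) : ConsistentFin π l := fun i h =>
  (hπ _ _ ((consistentFin_liftFin_iff π' l).1
    ((consistentFin_termPath_iff π' l).1 hl.2.1).1 i h).symm).symm

section TermOnSatPolicy

open scoped Classical

noncomputable def termOnSatPolicy (M : MDP S A AP) (π : Policy S A) (φ : LTL AP) :
    Policy (Option S) (Option A) :=
  Function.extend liftFin
    (fun l => if LTL.SatF (M.traceF l) φ then none else some (π l)) fun _ => none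

theorem termOnSatPolicy_liftFin (M : MDP S A AP) (π : Policy S A) (φ : LTL AP) (l : FinPath S A) :
    termOnSatPolicy M π φ (liftFin l) = if LTL.SatF (M.traceF l) φ then none else some (π l) :=
  liftFin_injective.extend_apply _ _ l

theorem MDP.isPolicy_termOnSatPolicy {M : MDP S A AP} {π : Policy S A} (hπ : M.IsPolicy π)
    (φ : LTL AP) : M.augment.IsPolicy (termOnSatPolicy M π φ) := by
  intro l'
  by_cases h : ∃ l, liftFin l = l'
  · obtain ⟨l, rfl⟩ := h
    rw [termOnSatPolicy_liftFin, M.lastState_liftFin]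
    split_ifs
    · exact M.none_mem_augment_enabled _
    · exact (M.some_mem_augment_enabled_iff _ _).2 (hπ l)
  · rw [termOnSatPolicy, Function.extend_apply' _ _ _ fun ⟨l, hl⟩ => h ⟨l, hl⟩]
    exact M.none_mem_augment_enabled _

theorem MDP.termSatPaths_termOnSatPolicy (M : MDP S A AP) (π : Policy S A) (φ : LTL AP) :
    M.termSatPaths (termOnSatPolicy M π φ) φ = M.minSatPaths π φ := by
  ext l
  simp only [MDP.termSatPaths, MDP.minSatPaths, Set.mem_ofPred_eq, consistentFin_termPath_iff,
    consistentFin_liftFin_iff, termOnSatPolicy_liftFin]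
  have hstep : ∀ i (h : i < l.length), (some l[i].1 =
      if LTL.SatF (M.traceF (l.take i)) φ then none else some (π (l.take i))) ↔
        l[i].1 = π (l.take i) ∧ ¬ LTL.SatF (M.traceF (l.take i)) φ := by
    intro i h
    split_ifs with hs <;> simp [hs]
  simp only [hstep, forall_and, ConsistentFin, List.get_eq_getElem]
  constructor
  · rintro ⟨hv, ⟨⟨hc, hmin⟩, -⟩, hs⟩
    exact ⟨hv, hc, hs, hmin⟩
  · rintro ⟨hv, hc, hs, hmin⟩
    exact ⟨hv, ⟨⟨hc, hmin⟩, if_pos hs⟩, hs⟩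

end TermOnSatPolicy

theorem optimal_augment_policy_projects_to_optimal_general
    {S A AP : Type} [Fintype S] [Fintype A]
    (M : MDP S A AP) (φ : LTL AP)
    (μf : ∀ π : Policy S A,
      @MeasureTheory.Measure (InfPath S A) (M.cylSigma π))
    (hμf : ∀ π : Policy S A, M.IsPolicy π → IsCylMeasure M π (μf π))
    (μf' : ∀ π' : Policy (Option S) (Option A),
      @MeasureTheory.Measure (InfPath (Option S) (Option A))
        ((M.augment).cylSigma π'))
    (hμf' : ∀ π' : Policy (Option S) (Option A),
      (M.augment).IsPolicy π' → IsCylMeasure (M.augment) π' (μf' π'))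
    (π' : Policy (Option S) (Option A)) (hπ' : (M.augment).IsPolicy π')
    (hopt : ∀ π'' : Policy (Option S) (Option A), (M.augment).IsPolicy π'' →
      μf' π'' ((M.augment).SatLTLSet π'' (LTL.gtrans φ)) ≤
        μf' π' ((M.augment).SatLTLSet π' (LTL.gtrans φ)))
    (π : Policy S A) (hπ : M.IsPolicy π)
    (hrepl : ∀ (l : FinPath S A) (a : A), π' (liftFin l) = some a → π l = a) :
    μf π (M.SatPhiSet π φ) =
      ⨆ (π₂ : Policy S A) (_ : M.IsPolicy π₂), μf π₂ (M.SatPhiSet π₂ φ) := by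
  refine le_antisymm
    (le_iSup₂ (f := fun π₂ (_ : M.IsPolicy π₂) => μf π₂ (M.SatPhiSet π₂ φ)) π hπ)
    (iSup₂_le fun π₂ hπ₂ => ?_)
  set π₂' := termOnSatPolicy M π₂ φ
  have hlift : M.augment.IsPolicy π₂' := M.isPolicy_termOnSatPolicy hπ₂ φ
  calc μf π₂ (M.SatPhiSet π₂ φ)
      = μf' π₂' (M.augment.SatLTLSet π₂' φ.gtrans) := by
        rw [(hμf π₂ hπ₂).measure_satPhiSet, (hμf' _ hlift).measure_augment_satLTLSet_gtrans,
          M.termSatPaths_termOnSatPolicy]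
    _ ≤ μf' π' (M.augment.SatLTLSet π' φ.gtrans) := hopt _ hlift
    _ = μf π (⋃ l ∈ M.termSatPaths π' φ, M.Cyl π l) := by
        rw [(hμf' π' hπ').measure_augment_satLTLSet_gtrans]
        exact ((hμf π hπ).measure_biUnion_cyl (f := id) (fun l hl => hl.1)
          (fun l hl => M.consistentFin_of_mem_termSatPaths hrepl hl)
          fun _ h₁ _ h₂ => M.eq_of_prefix_of_mem_termSatPaths h₁ h₂).symm
    _ ≤ μf π (M.SatPhiSet π φ) :=
        MeasureTheory.measure_mono
          (Set.iUnion₂_subset fun l hl => M.cyl_subset_satPhiSet π hl.2.2)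

/-- Corollary 1: if `π'*` maximizes `Pr(M'^{π'} ⊨ g(φ))` over
all policies of the augmented MDP `M'`, then any policy `π` of `M` obtained
from `π'*` by replacing every choice of `a_term` with an arbitrary enabled
action of `M` maximizes `Pr(M^π ⊨ φ)` over all policies of `M`. -/
theorem optimal_augment_policy_projects_to_optimal
    {S A AP : Type} [Fintype S] [Fintype A] [Fintype AP]
    (M : MDP S A AP) (hM : M.IsWF) (φ : LTL AP)
    (μf : ∀ π : Policy S A,
      @MeasureTheory.Measure (InfPath S A) (M.cylSigma π))
    (hμf : ∀ π : Policy S A, M.IsPolicy π → IsCylMeasure M π (μf π))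
    (μf' : ∀ π' : Policy (Option S) (Option A),
      @MeasureTheory.Measure (InfPath (Option S) (Option A))
        ((M.augment).cylSigma π'))
    (hμf' : ∀ π' : Policy (Option S) (Option A),
      (M.augment).IsPolicy π' → IsCylMeasure (M.augment) π' (μf' π'))
    (π' : Policy (Option S) (Option A)) (hπ' : (M.augment).IsPolicy π')
    (hopt : ∀ π'' : Policy (Option S) (Option A), (M.augment).IsPolicy π'' →
      μf' π'' ((M.augment).SatLTLSet π'' (LTL.gtrans φ)) ≤
        μf' π' ((M.augment).SatLTLSet π' (LTL.gtrans φ)))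
    (π : Policy S A) (hπ : M.IsPolicy π)
    (hrepl : ∀ (l : FinPath S A) (a : A), π' (liftFin l) = some a → π l = a) :
    μf π (M.SatPhiSet π φ) =
      ⨆ (π₂ : Policy S A) (_ : M.IsPolicy π₂), μf π₂ (M.SatPhiSet π₂ φ) :=
  optimal_augment_policy_projects_to_optimal_general M φ μf hμf μf' hμf' π' hπ' hopt π hπ hrepl

end LTLfMDP
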